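/- arXiv:2203.00161 — 12 statements merged into one kernel-verified Lean document; each statement's English description precedes it below -/
import Mathlib

section
/- Let Z, A, M, Y be finitely-valued with strictly positive joint pmf p. Define the nested propensity score q̃(a | y, z, m) = p(a | z) · p(y | z, a, m) / Σ_{a'} p(a' | z) · p(y | z, a', m). Then for each fixed a, the function (z, m, y) ↦ p(z, a, m, y) / q̃(a | y, z, m) is a probability mass function on Z × M × Y, and it equals p(z) · p(m | a, z) · Σ_{a'} p(a' | z) · p(y | z, a', m). -/
open Finset

/-- The function `(z, m, y) ↦ p(z, a, m, y) / q̃(a | y, z, m)`, where `q̃` is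
the nested propensity score, is a pmf on `Z × M × Y` and equals
`p(z) * p(m | a, z) * ∑ a', p(a' | z) * p(y | z, a', m)`. -/
theorem stmt_2
    {Z A M Y : Type*} [Fintype Z] [Fintype A] [Fintype M] [Fintype Y]
    (p : Z → A → M → Y → ℝ)
    (hpos : ∀ z a m y, 0 < p z a m y)
    (hnorm : ∑ z, ∑ a, ∑ m, ∑ y, p z a m y = 1)
    (pZm : Z → ℝ)
    (hpZm : ∀ z, pZm z = ∑ a, ∑ m, ∑ y, p z a m y)
    (pA : A → Z → ℝ)
    (hpA : ∀ a z, pA a z = (∑ m, ∑ y, p z a m y) / (∑ a', ∑ m, ∑ y, p z a' m y))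
    (pM : M → A → Z → ℝ)
    (hpM : ∀ m a z, pM m a z = (∑ y, p z a m y) / (∑ m', ∑ y, p z a m' y))
    (pY : Y → Z → A → M → ℝ)
    (hpY : ∀ y z a m, pY y z a m = p z a m y / (∑ y', p z a m y'))
    (qt : A → Y → Z → M → ℝ)
    (hqt : ∀ a y z m,
      qt a y z m = pA a z * pY y z a m / (∑ a', pA a' z * pY y z a' m)) :
    ∀ a : A,
      (∀ z m y, 0 ≤ p z a m y / qt a y z m) ∧
      (∑ z, ∑ m, ∑ y, p z a m y / qt a y z m = 1) ∧
      (∀ z m y, p z a m y / qt a y z m =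
        pZm z * pM m a z * (∑ a', pA a' z * pY y z a' m)) := by

  intro a
  have hZ : Nonempty Z := by
    by_contra h
    rw [not_nonempty_iff] at h
    simp at hnorm
  have hA : Nonempty A := by
    by_contra h
    rw [not_nonempty_iff] at h
    simp at hnorm
  have hM : Nonempty M := by
    by_contra h
    rw [not_nonempty_iff] at h
    simp at hnorm
  have hY : Nonempty Y := by
    by_contra h
    rw [not_nonempty_iff] at h
    simp at hnorm
  have hPam : ∀ z a m, 0 < ∑ y, p z a m y := fun z a m =>
    Finset.sum_pos (fun y _ => hpos z a m y) Finset.univ_nonempty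
  have hPa : ∀ z a, 0 < ∑ m, ∑ y, p z a m y := fun z a =>
    Finset.sum_pos (fun m _ => hPam z a m) Finset.univ_nonempty
  have hPz : ∀ z, 0 < ∑ a, ∑ m, ∑ y, p z a m y := fun z =>
    Finset.sum_pos (fun a _ => hPa z a) Finset.univ_nonempty
  have hpApos : ∀ a z, 0 < pA a z := fun a z => by
    rw [hpA]; exact div_pos (hPa z a) (hPz z)
  have hpYpos : ∀ y z a m, 0 < pY y z a m := fun y z a m => by
    rw [hpY]; exact div_pos (hpos z a m y) (hPam z a m)
  have hS : ∀ z m y, 0 < ∑ a', pA a' z * pY y z a' m := fun z m y =>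
    Finset.sum_pos (fun a' _ => mul_pos (hpApos a' z) (hpYpos y z a' m))
      Finset.univ_nonempty
  have key : ∀ z m y, p z a m y / qt a y z m =
      pZm z * pM m a z * (∑ a', pA a' z * pY y z a' m) := by
    intro z m y
    rw [hqt, hpZm, hpM, hpA, hpY]
    have h1 := (hPam z a m).ne'
    have h2 := (hPa z a).ne'
    have h3 := (hPz z).ne'
    have h4 := (hpos z a m y).ne'
    have h5 := (hS z m y).ne'
    field_simp
  have hsumY : ∀ z a m, ∑ y, pY y z a m = 1 := by
    intro z a m
    simp only [hpY]
    rw [← Finset.sum_div, div_self (hPam z a m).ne']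
  have hsumA : ∀ z, ∑ a', pA a' z = 1 := by
    intro z
    simp only [hpA]
    rw [← Finset.sum_div, div_self (hPz z).ne']
  have hsumM : ∀ z, ∑ m, pM m a z = 1 := by
    intro z
    simp only [hpM]
    rw [← Finset.sum_div, div_self (hPa z a).ne']
  have hinner : ∀ z m, ∑ y, ∑ a', pA a' z * pY y z a' m = 1 := by
    intro z m
    rw [Finset.sum_comm]
    rw [Finset.sum_congr rfl (fun a' _ => by
      rw [← Finset.mul_sum, hsumY z a' m, mul_one])]
    exact hsumA z
  refine ⟨fun z m y => ?_, ?_, key⟩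
  · rw [key]
    have := mul_pos (mul_pos (hpZm z ▸ hPz z) ((hpM m a z) ▸ div_pos (hPam z a m) (hPa z a))) (hS z m y)
    exact this.le
  · simp only [key]
    have step1 : ∀ z m, ∑ y, pZm z * pM m a z * (∑ a', pA a' z * pY y z a' m)
        = pZm z * pM m a z := by
      intro z m
      rw [← Finset.mul_sum, hinner z m, mul_one]
    simp only [step1]
    have step2 : ∀ z, ∑ m, pZm z * pM m a z = pZm z := by
      intro z
      rw [← Finset.mul_sum, hsumM z, mul_one]
    simp only [step2]
    simp only [hpZm]
    exact hnorm
end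

section
/- Let Z, A, M, Y be finitely-valued with strictly positive joint pmf p, and fix a value a of A. Define the dual weight q^d(m | a', z) = p(m | a', z) / p(m | a, z). Then Σ_{a'} [ p(z, a', m, y) / q^d(m | a', z) ] = p(z) · p(m | a, z) · Σ_{a'} p(a' | z) · p(y | z, a', m); that is, marginalizing the dual-reweighted joint over A recovers the identified post-intervention distribution p(z, m, y | do(a)). -/
open Finset

/-- Marginalizing the dual-reweighted joint over `A` recovers the identified
post-intervention distribution `p(z, m, y | do(a))`:
`∑ a', p(z, a', m, y) / q^d(m | a', z) = p(z) * p(m | a, z) * ∑ a', p(a' | z) * p(y | z, a', m)`,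
where `q^d(m | a', z) = p(m | a', z) / p(m | a, z)`. -/
theorem stmt_3
    {Z A M Y : Type*} [Fintype Z] [Fintype A] [Fintype M] [Fintype Y]
    (p : Z → A → M → Y → ℝ)
    (hpos : ∀ z a m y, 0 < p z a m y)
    (hnorm : ∑ z, ∑ a, ∑ m, ∑ y, p z a m y = 1)
    (pZm : Z → ℝ)
    (hpZm : ∀ z, pZm z = ∑ a, ∑ m, ∑ y, p z a m y)
    (pA : A → Z → ℝ)
    (hpA : ∀ a z, pA a z = (∑ m, ∑ y, p z a m y) / (∑ a', ∑ m, ∑ y, p z a' m y))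
    (pM : M → A → Z → ℝ)
    (hpM : ∀ m a z, pM m a z = (∑ y, p z a m y) / (∑ m', ∑ y, p z a m' y))
    (pY : Y → Z → A → M → ℝ)
    (hpY : ∀ y z a m, pY y z a m = p z a m y / (∑ y', p z a m y'))
    (a : A)
    (qd : M → A → Z → ℝ)
    (hqd : ∀ m a' z, qd m a' z = pM m a' z / pM m a z) :
    ∀ z m y,
      ∑ a', p z a' m y / qd m a' z =
      pZm z * pM m a z * (∑ a', pA a' z * pY y z a' m) := by
  intro z m y
  have hY : Nonempty Y := by
    rcases isEmpty_or_nonempty Y with h | h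
    · simp at hnorm
    · exact h
  have hM : Nonempty M := by
    rcases isEmpty_or_nonempty M with h | h
    · simp at hnorm
    · exact h
  have hA : Nonempty A := by
    rcases isEmpty_or_nonempty A with h | h
    · simp at hnorm
    · exact h
  have hR : ∀ a' m', 0 < ∑ y', p z a' m' y' :=
    fun a' m' => Finset.sum_pos (fun y' _ => hpos z a' m' y') Finset.univ_nonempty
  have hS : ∀ a', 0 < ∑ m', ∑ y', p z a' m' y' :=
    fun a' => Finset.sum_pos (fun m' _ => hR a' m') Finset.univ_nonempty
  have hT : 0 < ∑ a', ∑ m', ∑ y', p z a' m' y' :=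
    Finset.sum_pos (fun a' _ => hS a') Finset.univ_nonempty
  rw [Finset.mul_sum]
  refine Finset.sum_congr rfl fun a' _ => ?_
  simp only [hqd, hpM, hpA, hpY, hpZm]
  have h1 := (hR a' m).ne'
  have h2 := (hR a m).ne'
  have h3 := (hS a').ne'
  have h4 := (hS a).ne'
  have h5 := hT.ne'
  field_simp
end

section
/- Let Z, A, M, Y be finitely-valued with strictly positive joint pmf p correctly normalized, and define the front-door functional F(a) = Σ_m p(m | a) · Σ_{a'} p(a') · E[Y | a', m] where Y takes real values. Suppose p is generated by a structural model in which Z, A, M, Y have joint pmf p(z,a,m,y) = p(z) p(a | z, u) p(m | a, z) p(y | m, u) marginalized over a hidden finite variable U with pmf p(u) (so that M fully mediates A's effect and U confounds only A and Y). Then Σ_{z,m} p(z) · p(m | a, z) · Σ_{a'} p(a' | z) · E[Y | z, a', m] = Σ_{z,m,u} p(z) p(u) p(m | a, z) · E_p[Y | m, u], the true interventional mean Σ_y y · p(y | do(a)). -/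
/-!
Marginalizing the structural model over `U` gives the observed joint
`p(z, a, m, y) = p(z) p(m | a, z) Σ_u p(u) p(a | z, u) p(y | m, u)`. Summing out `y`, `m` and `a`
in turn shows that the observed conditionals `p(z)` and `p(m | a, z)` are the structural ones and
that `p(a | z) = Σ_u p(u) p(a | z, u)`, since `U` is independent of `Z`. Hence
`p(a' | z) · E[Y | z, a', m] = Σ_u p(u) p(a' | z, u) E[Y | m, u]`, and summing over `a'` removes
`p(a' | z, u)`, which leaves exactly the interventional mean.
-/

open Finset

namespace FrontDoor

variable {Z U A M Y : Type*}

def joint [Fintype U] (pz : Z → ℝ) (pu : U → ℝ) (pa : A → Z → U → ℝ) (pm : M → A → Z → ℝ)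
    (py : Y → M → U → ℝ) (z : Z) (a : A) (m : M) (y : Y) : ℝ :=
  ∑ u, pz z * pu u * pa a z u * pm m a z * py y m u

def propensity [Fintype U] (pu : U → ℝ) (pa : A → Z → U → ℝ) (a : A) (z : Z) : ℝ :=
  ∑ u, pu u * pa a z u

variable [Fintype U] (pz : Z → ℝ) (pu : U → ℝ) (pa : A → Z → U → ℝ) (pm : M → A → Z → ℝ)
  (py : Y → M → U → ℝ)

theorem sum_mul_joint [Fintype Y] (f : Y → ℝ) (z : Z) (a : A) (m : M) :
    ∑ y, f y * joint pz pu pa pm py z a m y =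
      pz z * pm m a z * ∑ u, pu u * pa a z u * ∑ y, f y * py y m u := by
  simp only [joint, mul_sum]
  rw [sum_comm]
  exact sum_congr rfl fun u _ => sum_congr rfl fun y _ => by ring

theorem sum_joint [Fintype Y] (hpyn : ∀ m u, ∑ y, py y m u = 1) (z : Z) (a : A) (m : M) :
    ∑ y, joint pz pu pa pm py z a m y = pz z * pm m a z * propensity pu pa a z := by
  simpa [hpyn, propensity] using sum_mul_joint pz pu pa pm py 1 z a m

theorem sum_sum_joint [Fintype M] [Fintype Y] (hpmn : ∀ a z, ∑ m, pm m a z = 1)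
    (hpyn : ∀ m u, ∑ y, py y m u = 1) (z : Z) (a : A) :
    ∑ m, ∑ y, joint pz pu pa pm py z a m y = pz z * propensity pu pa a z := by
  simp_rw [sum_joint pz pu pa pm py hpyn, ← sum_mul, ← mul_sum, hpmn, mul_one]

theorem sum_mul_propensity [Fintype A] (hpan : ∀ z u, ∑ a, pa a z u = 1) (g : U → ℝ) (z : Z) :
    ∑ a, ∑ u, pu u * pa a z u * g u = ∑ u, pu u * g u := by
  rw [sum_comm]
  simp_rw [← sum_mul, ← mul_sum, hpan, mul_one]

theorem sum_propensity [Fintype A] (hpun : ∑ u, pu u = 1) (hpan : ∀ z u, ∑ a, pa a z u = 1)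
    (z : Z) : ∑ a, propensity pu pa a z = 1 := by
  simpa [propensity, hpun] using sum_mul_propensity pu pa hpan 1 z

theorem sum_sum_sum_joint [Fintype A] [Fintype M] [Fintype Y] (hpun : ∑ u, pu u = 1)
    (hpan : ∀ z u, ∑ a, pa a z u = 1) (hpmn : ∀ a z, ∑ m, pm m a z = 1)
    (hpyn : ∀ m u, ∑ y, py y m u = 1) (z : Z) :
    ∑ a, ∑ m, ∑ y, joint pz pu pa pm py z a m y = pz z := by
  simp_rw [sum_sum_joint pz pu pa pm py hpmn hpyn, ← mul_sum, sum_propensity pu pa hpun hpan,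
    mul_one]

theorem propensity_pos [Nonempty U] (hpu : ∀ u, 0 < pu u) (hpa : ∀ a z u, 0 < pa a z u)
    (a : A) (z : Z) : 0 < propensity pu pa a z :=
  sum_pos (fun u _ => mul_pos (hpu u) (hpa a z u)) univ_nonempty

theorem propensity_mul_condExp [Fintype Y] (hpyn : ∀ m u, ∑ y, py y m u = 1) (f : Y → ℝ)
    {z : Z} {a : A} (m : M) (hz : pz z ≠ 0) (hm : pm m a z ≠ 0)
    (ha : propensity pu pa a z ≠ 0) :
    propensity pu pa a z * ∑ y, f y * (joint pz pu pa pm py z a m y /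
        ∑ y', joint pz pu pa pm py z a m y') =
      ∑ u, pu u * pa a z u * ∑ y, f y * py y m u := by
  simp_rw [sum_joint pz pu pa pm py hpyn, ← mul_div_assoc, ← sum_div, sum_mul_joint]
  field_simp

end FrontDoor

open FrontDoor in
theorem stmt_4_general
    {Z U A M Y : Type*} [Fintype Z] [Fintype U] [Fintype A] [Fintype M] [Fintype Y]
    (f : Y → ℝ)
    (pz : Z → ℝ) (pu : U → ℝ) (pa : A → Z → U → ℝ)
    (pm : M → A → Z → ℝ) (py : Y → M → U → ℝ)
    (hpz : ∀ z, 0 < pz z) (hpu : ∀ u, 0 < pu u)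
    (hpa : ∀ a z u, 0 < pa a z u) (hpm : ∀ m a z, 0 < pm m a z)
    (hpun : ∑ u, pu u = 1)
    (hpan : ∀ z u, ∑ a, pa a z u = 1) (hpmn : ∀ a z, ∑ m, pm m a z = 1)
    (hpyn : ∀ m u, ∑ y, py y m u = 1)
    (p : Z → A → M → Y → ℝ)
    (hp : ∀ z a m y, p z a m y = ∑ u, pz z * pu u * pa a z u * pm m a z * py y m u)
    (pZm : Z → ℝ)
    (hpZm : ∀ z, pZm z = ∑ a, ∑ m, ∑ y, p z a m y)
    (pAo : A → Z → ℝ)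
    (hpAo : ∀ a z, pAo a z = (∑ m, ∑ y, p z a m y) / (∑ a', ∑ m, ∑ y, p z a' m y))
    (pMo : M → A → Z → ℝ)
    (hpMo : ∀ m a z, pMo m a z = (∑ y, p z a m y) / (∑ m', ∑ y, p z a m' y))
    (pYo : Y → Z → A → M → ℝ)
    (hpYo : ∀ y z a m, pYo y z a m = p z a m y / (∑ y', p z a m y')) :
    ∀ a : A,
      ∑ z, ∑ m, pZm z * pMo m a z * (∑ a', pAo a' z * (∑ y, f y * pYo y z a' m)) =
      ∑ z, ∑ m, ∑ u, pz z * pu u * pm m a z * (∑ y, f y * py y m u) := by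
  intro a
  obtain rfl : p = joint pz pu pa pm py := funext fun z => funext fun a => funext fun m =>
    funext fun y => hp z a m y
  have : Nonempty U := by
    by_contra hU
    simp [not_nonempty_iff.mp hU] at hpun
  have hZ (z : Z) : pZm z = pz z := by
    rw [hpZm, sum_sum_sum_joint pz pu pa pm py hpun hpan hpmn hpyn]
  have hA (a : A) (z : Z) : pAo a z = propensity pu pa a z := by
    rw [hpAo, sum_sum_joint pz pu pa pm py hpmn hpyn,
      sum_sum_sum_joint pz pu pa pm py hpun hpan hpmn hpyn, mul_div_cancel_left₀ _ (hpz z).ne']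
  have hM (m : M) (a : A) (z : Z) : pMo m a z = pm m a z := by
    rw [hpMo, sum_joint pz pu pa pm py hpyn, sum_sum_joint pz pu pa pm py hpmn hpyn]
    field_simp [(hpz z).ne', (propensity_pos pu pa hpu hpa a z).ne']
  have hE (z : Z) (a' : A) (m : M) :
      pAo a' z * ∑ y, f y * pYo y z a' m = ∑ u, pu u * pa a' z u * ∑ y, f y * py y m u := by
    simp_rw [hA, hpYo]
    exact propensity_mul_condExp pz pu pa pm py hpyn f m (hpz z).ne' (hpm m a' z).ne'
      (propensity_pos pu pa hpu hpa a' z).ne'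
  simp_rw [hZ, hM, hE, sum_mul_propensity pu pa hpan]
  refine sum_congr rfl fun z _ => sum_congr rfl fun m _ => ?_
  rw [mul_sum]
  exact sum_congr rfl fun u _ => by ring

/-- In the structural front-door model with anchor `Z` and hidden confounder
`U` (factorization `p(z)·p(u)·p(a|z,u)·p(m|a,z)·p(y|m,u)`), the generalized front-door
functional computed from the observed margin equals the true interventional mean
`∑ y, y · p(y | do(a))`. -/
theorem stmt_4
    {Z U A M Y : Type*} [Fintype Z] [Fintype U] [Fintype A] [Fintype M] [Fintype Y]
    (f : Y → ℝ)
    (pz : Z → ℝ) (pu : U → ℝ) (pa : A → Z → U → ℝ)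
    (pm : M → A → Z → ℝ) (py : Y → M → U → ℝ)
    (hpz : ∀ z, 0 < pz z) (hpu : ∀ u, 0 < pu u)
    (hpa : ∀ a z u, 0 < pa a z u) (hpm : ∀ m a z, 0 < pm m a z)
    (hpy : ∀ y m u, 0 < py y m u)
    (hpzn : ∑ z, pz z = 1) (hpun : ∑ u, pu u = 1)
    (hpan : ∀ z u, ∑ a, pa a z u = 1) (hpmn : ∀ a z, ∑ m, pm m a z = 1)
    (hpyn : ∀ m u, ∑ y, py y m u = 1)
    (p : Z → A → M → Y → ℝ)
    (hp : ∀ z a m y, p z a m y = ∑ u, pz z * pu u * pa a z u * pm m a z * py y m u)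
    (pZm : Z → ℝ)
    (hpZm : ∀ z, pZm z = ∑ a, ∑ m, ∑ y, p z a m y)
    (pAo : A → Z → ℝ)
    (hpAo : ∀ a z, pAo a z = (∑ m, ∑ y, p z a m y) / (∑ a', ∑ m, ∑ y, p z a' m y))
    (pMo : M → A → Z → ℝ)
    (hpMo : ∀ m a z, pMo m a z = (∑ y, p z a m y) / (∑ m', ∑ y, p z a m' y))
    (pYo : Y → Z → A → M → ℝ)
    (hpYo : ∀ y z a m, pYo y z a m = p z a m y / (∑ y', p z a m y')) :
    ∀ a : A,
      ∑ z, ∑ m, pZm z * pMo m a z * (∑ a', pAo a' z * (∑ y, f y * pYo y z a' m)) =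
      ∑ z, ∑ m, ∑ u, pz z * pu u * pm m a z * (∑ y, f y * py y m u) :=
  stmt_4_general f pz pu pa pm py hpz hpu hpa hpm hpun hpan hpmn hpyn p hp pZm hpZm pAo hpAo pMo
    hpMo pYo hpYo
end

section
/- Let Z, A, M, Y be finitely-valued random variables whose joint law is the margin of p(z, u, a, m, y) = p(z)·p(u)·p(a | z, u)·p(m | a, z)·p(y | m, u) for a hidden finite U, with all factors strictly positive. Then the Verma constraint holds: the kernel q_Y(y | z, m) = Σ_a p(a | z) · p(y | z, a, m) does not depend on z, and in fact q_Y(y | z, m) = Σ_u p(u) · p(y | m, u) for all z. -/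
open Finset

/-- In the structural front-door model with anchor `Z` and hidden `U`, the
Verma constraint holds: `q_Y(y | z, m) = ∑ a, p(a | z) · p(y | z, a, m)` does not depend
on `z`, and equals `∑ u, p(u) · p(y | m, u)` for every `z`. -/
theorem stmt_5
    {Z U A M Y : Type*} [Fintype Z] [Fintype U] [Fintype A] [Fintype M] [Fintype Y]
    (pz : Z → ℝ) (pu : U → ℝ) (pa : A → Z → U → ℝ)
    (pm : M → A → Z → ℝ) (py : Y → M → U → ℝ)
    (hpz : ∀ z, 0 < pz z) (hpu : ∀ u, 0 < pu u)
    (hpa : ∀ a z u, 0 < pa a z u) (hpm : ∀ m a z, 0 < pm m a z)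
    (hpy : ∀ y m u, 0 < py y m u)
    (hpzn : ∑ z, pz z = 1) (hpun : ∑ u, pu u = 1)
    (hpan : ∀ z u, ∑ a, pa a z u = 1) (hpmn : ∀ a z, ∑ m, pm m a z = 1)
    (hpyn : ∀ m u, ∑ y, py y m u = 1)
    (p : Z → A → M → Y → ℝ)
    (hp : ∀ z a m y, p z a m y = ∑ u, pz z * pu u * pa a z u * pm m a z * py y m u)
    (pAo : A → Z → ℝ)
    (hpAo : ∀ a z, pAo a z = (∑ m, ∑ y, p z a m y) / (∑ a', ∑ m, ∑ y, p z a' m y))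
    (pYo : Y → Z → A → M → ℝ)
    (hpYo : ∀ y z a m, pYo y z a m = p z a m y / (∑ y', p z a m y'))
    (qY : Y → Z → M → ℝ)
    (hqY : ∀ y z m, qY y z m = ∑ a, pAo a z * pYo y z a m) :
    ∀ y z m, qY y z m = ∑ u, pu u * py y m u := by
  intro y z m
  have hU : (Finset.univ : Finset U).Nonempty := by
    by_contra h
    rw [Finset.not_nonempty_iff_eq_empty] at h
    rw [h] at hpun; simp at hpun
  set S : A → ℝ := fun a => ∑ u, pu u * pa a z u with hS
  set T : A → ℝ := fun a => ∑ u, pu u * pa a z u * py y m u with hT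
  have hSpos : ∀ a, 0 < S a := fun a =>
    Finset.sum_pos (fun u _ => mul_pos (hpu u) (hpa a z u)) hU
  have hpform : ∀ a (y' : Y), p z a m y' =
      pz z * pm m a z * ∑ u, pu u * pa a z u * py y' m u := by
    intro a y'
    rw [hp, Finset.mul_sum]
    exact Finset.sum_congr rfl fun u _ => by ring
  have h1 : ∀ a, ∑ y', p z a m y' = pz z * pm m a z * S a := by
    intro a
    simp only [hpform]
    rw [← Finset.mul_sum, Finset.sum_comm]
    congr 1
    refine Finset.sum_congr rfl fun u _ => ?_
    rw [← Finset.mul_sum, hpyn, mul_one]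
  have h2 : ∀ a, ∑ m', ∑ y', p z a m' y' = pz z * S a := by
    intro a
    have : ∀ m', ∑ y', p z a m' y' = pz z * pm m' a z * S a := by
      intro m'
      have hpform' : ∀ (y' : Y), p z a m' y' =
          pz z * pm m' a z * ∑ u, pu u * pa a z u * py y' m' u := by
        intro y'
        rw [hp, Finset.mul_sum]
        exact Finset.sum_congr rfl fun u _ => by ring
      simp only [hpform']
      rw [← Finset.mul_sum, Finset.sum_comm]
      congr 1
      refine Finset.sum_congr rfl fun u _ => ?_
      rw [← Finset.mul_sum, hpyn, mul_one]
    simp only [this]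
    rw [← Finset.sum_mul, ← Finset.mul_sum, hpmn, mul_one]
  have h3 : ∑ a', ∑ m', ∑ y', p z a' m' y' = pz z := by
    simp only [h2]
    rw [← Finset.mul_sum, hS]
    rw [Finset.sum_comm]
    have : ∀ u : U, ∑ a', pu u * pa a' z u = pu u := by
      intro u; rw [← Finset.mul_sum, hpan, mul_one]
    simp only [this, hpun, mul_one]
  have hAo : ∀ a, pAo a z = S a := by
    intro a
    rw [hpAo, h2, h3, mul_comm, mul_div_assoc, div_self (hpz z).ne', mul_one]
  have hYo : ∀ a, pYo y z a m = T a / S a := by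
    intro a
    rw [hpYo, h1, hpform, mul_div_mul_left _ _ (mul_pos (hpz z) (hpm m a z)).ne']
  rw [hqY]
  simp only [hAo, hYo]
  have : ∀ a, S a * (T a / S a) = T a := fun a =>
    mul_div_cancel₀ (T a) (hSpos a).ne'
  simp only [this]
  simp only [hT]
  rw [Finset.sum_comm]
  refine Finset.sum_congr rfl fun u _ => ?_
  have : ∀ a, pu u * pa a z u * py y m u = py y m u * pu u * pa a z u := by
    intro a; ring
  simp only [this]
  rw [← Finset.mul_sum, hpan, mul_one]; ring
end

section
/- Let Z, A, M, Y be finitely-valued random variables whose joint law is the margin of p(z, u, a, m, y) = p(z)·p(u)·p(a | z, u)·p(m | a, z)·p(y | a, m, u), i.e., the exclusion restriction is violated by allowing Y to depend directly on A. Show that in this model the kernel q_Y(y | z, m) = Σ_a p(a | z)·p(y | z, a, m) equals Σ_a Σ_u p(a | z) p(u | z, a) p(y | a, m, u), and exhibit that this expression is in general a nontrivial function of z: specifically, construct binary Z, U, A, M, Y with strictly positive factors such that q_Y(y | z, m) differs for the two values of z. -/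
open Finset

noncomputable def q6 : Bool → Bool → Bool → Bool → ℝ := fun z a m y =>
  ∑ _u : Bool, (1/2 : ℝ) * (1/2) * (if a = z then 3/4 else 1/4) * (1/2)
      * (if y = a then 3/4 else 1/4)

noncomputable def qYb6 : Bool → Bool → Bool → ℝ := fun y z m =>
  ∑ a : Bool, ((∑ m' : Bool, ∑ y' : Bool, q6 z a m' y') /
      (∑ a' : Bool, ∑ m' : Bool, ∑ y' : Bool, q6 z a' m' y')) *
    (q6 z a m y / (∑ y' : Bool, q6 z a m y'))

/-- When the exclusion restriction is violated (outcome factor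
`p(y | a, m, u)` depends directly on `a`), (i) the kernel
`q_Y(y | z, m) = ∑ a, p(a | z)·p(y | z, a, m)` equals
`∑ a, ∑ u, p(a | z)·p(u | z, a)·p(y | a, m, u)`, and (ii) there is an explicit binary
model with strictly positive factors in which this kernel genuinely depends on `z`
(failure of the Verma constraint). -/
theorem stmt_6
    {Z U A M Y : Type*} [Fintype Z] [Fintype U] [Fintype A] [Fintype M] [Fintype Y]
    (pz : Z → ℝ) (pu : U → ℝ) (pa : A → Z → U → ℝ)
    (pm : M → A → Z → ℝ) (py : Y → A → M → U → ℝ)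
    (hpz : ∀ z, 0 < pz z) (hpu : ∀ u, 0 < pu u)
    (hpa : ∀ a z u, 0 < pa a z u) (hpm : ∀ m a z, 0 < pm m a z)
    (hpy : ∀ y a m u, 0 < py y a m u)
    (hpzn : ∑ z, pz z = 1) (hpun : ∑ u, pu u = 1)
    (hpan : ∀ z u, ∑ a, pa a z u = 1) (hpmn : ∀ a z, ∑ m, pm m a z = 1)
    (hpyn : ∀ a m u, ∑ y, py y a m u = 1)
    (p : Z → A → M → Y → ℝ)
    (hp : ∀ z a m y, p z a m y = ∑ u, pz z * pu u * pa a z u * pm m a z * py y a m u)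
    (pAo : A → Z → ℝ)
    (hpAo : ∀ a z, pAo a z = (∑ m, ∑ y, p z a m y) / (∑ a', ∑ m, ∑ y, p z a' m y))
    (pYo : Y → Z → A → M → ℝ)
    (hpYo : ∀ y z a m, pYo y z a m = p z a m y / (∑ y', p z a m y'))
    (pUza : U → Z → A → ℝ)
    (hpUza : ∀ u z a,
      pUza u z a = pz z * pu u * pa a z u / (∑ u', pz z * pu u' * pa a z u'))
    (qY : Y → Z → M → ℝ)
    (hqY : ∀ y z m, qY y z m = ∑ a, pAo a z * pYo y z a m) :
    (∀ y z m, qY y z m = ∑ a, ∑ u, pAo a z * pUza u z a * py y a m u) ∧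
    (∃ (pz' pu' : Bool → ℝ) (pa' : Bool → Bool → Bool → ℝ)
       (pm' : Bool → Bool → Bool → ℝ) (py' : Bool → Bool → Bool → Bool → ℝ)
       (q : Bool → Bool → Bool → Bool → ℝ) (qYb : Bool → Bool → Bool → ℝ),
      (∀ z, 0 < pz' z) ∧ (∀ u, 0 < pu' u) ∧ (∀ a z u, 0 < pa' a z u) ∧
      (∀ m a z, 0 < pm' m a z) ∧ (∀ y a m u, 0 < py' y a m u) ∧
      (∑ z, pz' z = 1) ∧ (∑ u, pu' u = 1) ∧
      (∀ z u, ∑ a, pa' a z u = 1) ∧ (∀ a z, ∑ m, pm' m a z = 1) ∧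
      (∀ a m u, ∑ y, py' y a m u = 1) ∧
      (∀ z a m y, q z a m y = ∑ u, pz' z * pu' u * pa' a z u * pm' m a z * py' y a m u) ∧
      (∀ y z m, qYb y z m =
        ∑ a, ((∑ m', ∑ y', q z a m' y') / (∑ a', ∑ m', ∑ y', q z a' m' y')) *
          (q z a m y / (∑ y', q z a m y'))) ∧
      (∃ y m, qYb y true m ≠ qYb y false m)) := by
  constructor
  · -- Part (i)
    intro y z m
    have hU : Nonempty U := by
      by_contra h
      rw [not_nonempty_iff] at h
      simp [Finset.univ_eq_empty] at hpun
    rw [hqY]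
    refine Finset.sum_congr rfl fun a _ => ?_
    have hC : 0 < ∑ u', pz z * pu u' * pa a z u' :=
      Finset.sum_pos (fun u _ => mul_pos (mul_pos (hpz z) (hpu u)) (hpa a z u))
        Finset.univ_nonempty
    have h1 : (∑ y', p z a m y') = pm m a z * ∑ u', pz z * pu u' * pa a z u' := by
      simp only [hp]
      rw [Finset.sum_comm, Finset.mul_sum]
      refine Finset.sum_congr rfl fun u _ => ?_
      have : (∑ y', pz z * pu u * pa a z u * pm m a z * py y' a m u)
          = (pz z * pu u * pa a z u * pm m a z) * ∑ y', py y' a m u := by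
        rw [Finset.mul_sum]
      rw [this, hpyn]
      ring
    have h2 : p z a m y = pm m a z * ∑ u, (pz z * pu u * pa a z u) * py y a m u := by
      rw [hp, Finset.mul_sum]
      exact Finset.sum_congr rfl fun u _ => by ring
    have hYo : pYo y z a m = ∑ u, pUza u z a * py y a m u := by
      rw [hpYo, h1, h2, mul_div_mul_left _ _ (ne_of_gt (hpm m a z))]
      have : ∑ u, pUza u z a * py y a m u
          = (∑ u, (pz z * pu u * pa a z u) * py y a m u) / (∑ u', pz z * pu u' * pa a z u') := by
        rw [Finset.sum_div]
        exact Finset.sum_congr rfl fun u _ => by rw [hpUza]; ring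
      rw [this]
    rw [hYo, Finset.mul_sum]
    exact Finset.sum_congr rfl fun u _ => by ring
  · -- Part (ii)
    refine ⟨fun _ => 1/2, fun _ => 1/2,
      fun a z _ => if a = z then 3/4 else 1/4,
      fun _ _ _ => 1/2,
      fun y a _ _ => if y = a then 3/4 else 1/4,
      q6, qYb6,
      fun _ => by norm_num, fun _ => by norm_num,
      fun a z u => by dsimp only; split <;> norm_num,
      fun _ _ _ => by norm_num,
      fun y a m u => by dsimp only; split <;> norm_num,
      by norm_num [Fintype.sum_bool],
      by norm_num [Fintype.sum_bool],
      fun z u => by rcases z <;> norm_num [Fintype.sum_bool],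
      fun a z => by norm_num [Fintype.sum_bool],
      fun a m u => by rcases a <;> norm_num [Fintype.sum_bool],
      fun _ _ _ _ => rfl,
      fun _ _ _ => rfl,
      ⟨true, true, by norm_num [qYb6, q6, Fintype.sum_bool]⟩⟩
end

section
/- Let Z, A, M, Y be finitely-valued with strictly positive joint pmf p, which is the margin of the structural model p(z)·p(u)·p(a | z, u)·p(m | a, z)·p(y | m, u) with hidden finite U. For a fixed value a of A, define the primal IPW functional P(a) = Σ_{z, a', m, y} p(z, a', m, y) · 1[a' = a] · y / q̃(a' | y, z, m), where q̃(a' | y, z, m) = p(a' | z)·p(y | z, a', m) / Σ_{a''} p(a'' | z)·p(y | z, a'', m) and Y is real-valued. Then P(a) equals the true interventional mean E[Y | do(a)] = Σ_{z, u, m, y} p(z) p(u) p(m | a, z) p(y | m, u) · y. -/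
open Finset

/-- In the structural front-door model with anchor `Z` and hidden `U`, the
primal IPW functional (weighting by the inverse nested propensity score `q̃`) equals the
true interventional mean `E[Y | do(a)]`. -/
theorem stmt_7
    {Z U A M Y : Type*} [Fintype Z] [Fintype U] [Fintype A] [Fintype M] [Fintype Y]
    [DecidableEq A]
    (f : Y → ℝ)
    (pz : Z → ℝ) (pu : U → ℝ) (pa : A → Z → U → ℝ)
    (pm : M → A → Z → ℝ) (py : Y → M → U → ℝ)
    (hpz : ∀ z, 0 < pz z) (hpu : ∀ u, 0 < pu u)
    (hpa : ∀ a z u, 0 < pa a z u) (hpm : ∀ m a z, 0 < pm m a z)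
    (hpy : ∀ y m u, 0 < py y m u)
    (hpzn : ∑ z, pz z = 1) (hpun : ∑ u, pu u = 1)
    (hpan : ∀ z u, ∑ a, pa a z u = 1) (hpmn : ∀ a z, ∑ m, pm m a z = 1)
    (hpyn : ∀ m u, ∑ y, py y m u = 1)
    (p : Z → A → M → Y → ℝ)
    (hp : ∀ z a m y, p z a m y = ∑ u, pz z * pu u * pa a z u * pm m a z * py y m u)
    (pAo : A → Z → ℝ)
    (hpAo : ∀ a z, pAo a z = (∑ m, ∑ y, p z a m y) / (∑ a', ∑ m, ∑ y, p z a' m y))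
    (pYo : Y → Z → A → M → ℝ)
    (hpYo : ∀ y z a m, pYo y z a m = p z a m y / (∑ y', p z a m y'))
    (qt : A → Y → Z → M → ℝ)
    (hqt : ∀ a y z m,
      qt a y z m = pAo a z * pYo y z a m / (∑ a', pAo a' z * pYo y z a' m)) :
    ∀ a : A,
      (∑ z, ∑ a', ∑ m, ∑ y,
        p z a' m y * (if a' = a then (1 : ℝ) else 0) * f y / qt a' y z m) =
      ∑ z, ∑ u, ∑ m, ∑ y, pz z * pu u * pm m a z * py y m u * f y := by
  intro a
  have hU : Nonempty U := by
    by_contra h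
    rw [not_nonempty_iff] at h
    simp at hpun
  classical
  set s : Z → A → M → Y → ℝ := fun z a m y => ∑ u, pu u * pa a z u * py y m u with hs
  set g : Z → A → ℝ := fun z a => ∑ u, pu u * pa a z u with hg
  set T : Z → M → Y → ℝ := fun z m y => ∑ u, pu u * py y m u with hT
  have hspos : ∀ z a m y, 0 < s z a m y := fun z a m y =>
    Finset.sum_pos (fun u _ => mul_pos (mul_pos (hpu u) (hpa a z u)) (hpy y m u))
      Finset.univ_nonempty
  have hgpos : ∀ z a, 0 < g z a := fun z a =>
    Finset.sum_pos (fun u _ => mul_pos (hpu u) (hpa a z u)) Finset.univ_nonempty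
  have hTpos : ∀ z m y, 0 < T z m y := fun z m y =>
    Finset.sum_pos (fun u _ => mul_pos (hpu u) (hpy y m u)) Finset.univ_nonempty
  have hps : ∀ z a m y, p z a m y = pz z * pm m a z * s z a m y := by
    intro z a' m y
    rw [hp]
    simp only [hs, Finset.mul_sum]
    exact Finset.sum_congr rfl fun u _ => by ring
  have hsy : ∀ z a m, (∑ y, s z a m y) = g z a := by
    intro z a' m
    simp only [hs, hg]
    rw [Finset.sum_comm]
    refine Finset.sum_congr rfl fun u _ => ?_
    rw [← Finset.mul_sum, hpyn, mul_one]
  have hsa : ∀ z m y, (∑ a', s z a' m y) = T z m y := by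
    intro z m y
    simp only [hs, hT]
    rw [Finset.sum_comm]
    refine Finset.sum_congr rfl fun u _ => ?_
    rw [show (∑ a' : A, pu u * pa a' z u * py y m u)
        = (pu u * py y m u) * ∑ a' : A, pa a' z u from by
      rw [Finset.mul_sum]; exact Finset.sum_congr rfl fun a' _ => by ring]
    rw [hpan, mul_one]
  have hga : ∀ z, (∑ a', g z a') = 1 := by
    intro z
    simp only [hg]
    rw [Finset.sum_comm]
    rw [show (∑ u, ∑ a' : A, pu u * pa a' z u) = ∑ u, pu u from
      Finset.sum_congr rfl fun u _ => by rw [← Finset.mul_sum, hpan, mul_one]]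
    exact hpun
  have hpAo' : ∀ a' z, pAo a' z = g z a' := by
    intro a' z
    rw [hpAo]
    have hnum : ∀ a'' : A, (∑ m, ∑ y, p z a'' m y) = pz z * g z a'' := by
      intro a''
      rw [show (∑ m, ∑ y, p z a'' m y) = ∑ m, pz z * pm m a'' z * g z a'' from
        Finset.sum_congr rfl fun m _ => by
          rw [show (∑ y, p z a'' m y) = ∑ y, pz z * pm m a'' z * s z a'' m y from
            Finset.sum_congr rfl fun y _ => hps z a'' m y, ← Finset.mul_sum, hsy]]
      rw [show (∑ m, pz z * pm m a'' z * g z a'') = (pz z * g z a'') * ∑ m, pm m a'' z from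
        by rw [Finset.mul_sum]; exact Finset.sum_congr rfl fun m _ => by ring]
      rw [hpmn, mul_one]
    rw [hnum]
    rw [show (∑ a'', ∑ m, ∑ y, p z a'' m y) = pz z from by
      rw [Finset.sum_congr rfl fun a'' _ => hnum a'', ← Finset.mul_sum, hga, mul_one]]
    rw [mul_comm, mul_div_assoc, div_self (ne_of_gt (hpz z)), mul_one]
  have hpYo' : ∀ y z a' m, pYo y z a' m = s z a' m y / g z a' := by
    intro y z a' m
    rw [hpYo, hps]
    rw [show (∑ y', p z a' m y') = pz z * pm m a' z * g z a' from by
      rw [Finset.sum_congr rfl fun y' _ => hps z a' m y', ← Finset.mul_sum, hsy]]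
    rw [mul_div_mul_left _ _ (mul_pos (hpz z) (hpm m a' z)).ne']
  have hqt' : ∀ a' y z m, qt a' y z m = s z a' m y / T z m y := by
    intro a' y z m
    rw [hqt]
    have hc : ∀ a'' : A, pAo a'' z * pYo y z a'' m = s z a'' m y := by
      intro a''
      rw [hpAo', hpYo', mul_comm, div_mul_cancel₀ _ (ne_of_gt (hgpos z a''))]
    rw [hc, Finset.sum_congr rfl fun a'' _ => hc a'', hsa]
  -- main computation
  refine Finset.sum_congr rfl fun z _ => ?_
  have hterm : ∀ a' m y,
      p z a' m y * (if a' = a then (1 : ℝ) else 0) * f y / qt a' y z m =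
      if a' = a then pz z * pm m a z * T z m y * f y else 0 := by
    intro a' m y
    split
    next h =>
      subst h
      rw [mul_one, hps, hqt']
      have hsne := ne_of_gt (hspos z a' m y)
      have hTne := ne_of_gt (hTpos z m y)
      field_simp
    next h => simp
  calc (∑ a', ∑ m, ∑ y, p z a' m y * (if a' = a then (1:ℝ) else 0) * f y / qt a' y z m)
      = ∑ a', ∑ m, ∑ y, (if a' = a then pz z * pm m a z * T z m y * f y else 0) := by
        exact Finset.sum_congr rfl fun a' _ => Finset.sum_congr rfl fun m _ =>
          Finset.sum_congr rfl fun y _ => hterm a' m y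
    _ = ∑ a', (if a' = a then ∑ m, ∑ y, pz z * pm m a z * T z m y * f y else 0) := by
        refine Finset.sum_congr rfl fun a' _ => ?_
        split <;> simp
    _ = ∑ m, ∑ y, pz z * pm m a z * T z m y * f y := by
        rw [Finset.sum_ite_eq' Finset.univ a]
        simp
    _ = ∑ m, ∑ y, ∑ u, pz z * pu u * pm m a z * py y m u * f y := by
        refine Finset.sum_congr rfl fun m _ => Finset.sum_congr rfl fun y _ => ?_
        simp only [hT]
        rw [Finset.mul_sum, Finset.sum_mul]
        exact Finset.sum_congr rfl fun u _ => by ring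
    _ = ∑ m, ∑ u, ∑ y, pz z * pu u * pm m a z * py y m u * f y :=
        Finset.sum_congr rfl fun m _ => Finset.sum_comm
    _ = ∑ u, ∑ m, ∑ y, pz z * pu u * pm m a z * py y m u * f y :=
        Finset.sum_comm
end

section
/- Let Z, A, M, Y be finitely-valued with strictly positive joint pmf p, the margin of the structural model p(z)·p(u)·p(a | z, u)·p(m | a, z)·p(y | m, u). For fixed a, define the dual IPW functional D(a) = Σ_{z, a', m, y} p(z, a', m, y) · [p(m | a, z) / p(m | a', z)] · y, with Y real-valued. Then D(a) = E[Y | do(a)] = Σ_{z, u, m, y} p(z) p(u) p(m | a, z) p(y | m, u) · y. -/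
open Finset

/-- In the structural front-door model with anchor `Z` and hidden `U`, the
dual IPW functional `D(a) = ∑ p(z, a', m, y)·[p(m | a, z)/p(m | a', z)]·y` equals the
true interventional mean `E[Y | do(a)]`. -/
theorem stmt_8
    {Z U A M Y : Type*} [Fintype Z] [Fintype U] [Fintype A] [Fintype M] [Fintype Y]
    (f : Y → ℝ)
    (pz : Z → ℝ) (pu : U → ℝ) (pa : A → Z → U → ℝ)
    (pm : M → A → Z → ℝ) (py : Y → M → U → ℝ)
    (hpz : ∀ z, 0 < pz z) (hpu : ∀ u, 0 < pu u)
    (hpa : ∀ a z u, 0 < pa a z u) (hpm : ∀ m a z, 0 < pm m a z)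
    (hpy : ∀ y m u, 0 < py y m u)
    (hpzn : ∑ z, pz z = 1) (hpun : ∑ u, pu u = 1)
    (hpan : ∀ z u, ∑ a, pa a z u = 1) (hpmn : ∀ a z, ∑ m, pm m a z = 1)
    (hpyn : ∀ m u, ∑ y, py y m u = 1)
    (p : Z → A → M → Y → ℝ)
    (hp : ∀ z a m y, p z a m y = ∑ u, pz z * pu u * pa a z u * pm m a z * py y m u)
    (pMo : M → A → Z → ℝ)
    (hpMo : ∀ m a z, pMo m a z = (∑ y, p z a m y) / (∑ m', ∑ y, p z a m' y)) :
    ∀ a : A,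
      (∑ z, ∑ a', ∑ m, ∑ y, p z a' m y * (pMo m a z / pMo m a' z) * f y) =
      ∑ z, ∑ u, ∑ m, ∑ y, pz z * pu u * pm m a z * py y m u * f y := by
  -- marginal over y
  have hSy : ∀ z a m, ∑ y, p z a m y = pm m a z * (pz z * ∑ u, pu u * pa a z u) := by
    intro z a m
    simp only [hp]
    rw [Finset.sum_comm, Finset.mul_sum, Finset.mul_sum]
    refine Finset.sum_congr rfl fun u _ => ?_
    rw [show (∑ y, pz z * pu u * pa a z u * pm m a z * py y m u)
        = (pz z * pu u * pa a z u * pm m a z) * ∑ y, py y m u from (Finset.mul_sum ..).symm,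
      hpyn]
    ring
  have hU : Nonempty U := by
    by_contra h
    rw [not_nonempty_iff] at h
    simp at hpun
  have hSpos : ∀ a z, (0:ℝ) < pz z * ∑ u, pu u * pa a z u := by
    intro a z
    exact mul_pos (hpz z) (Finset.sum_pos (fun u _ => mul_pos (hpu u) (hpa a z u)) univ_nonempty)
  -- pMo equals pm
  have hkey : ∀ m a z, pMo m a z = pm m a z := by
    intro m a z
    rw [hpMo]
    have h2 : ∑ m', ∑ y, p z a m' y = pz z * ∑ u, pu u * pa a z u := by
      simp only [hSy]
      rw [← Finset.sum_mul, hpmn, one_mul]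
    rw [h2, hSy, mul_div_assoc, div_self (hSpos a z).ne', mul_one]
  intro a
  have L : ∀ z a' m y, p z a' m y * (pMo m a z / pMo m a' z) * f y
      = ∑ u, pz z * pu u * pa a' z u * pm m a z * py y m u * f y := by
    intro z a' m y
    rw [hkey, hkey, hp, Finset.sum_mul, Finset.sum_mul]
    refine Finset.sum_congr rfl fun u _ => ?_
    have h := (hpm m a' z).ne'
    field_simp
  simp only [L]
  refine Finset.sum_congr rfl fun z _ => ?_
  -- bring a' innermost on LHS
  rw [Finset.sum_comm]
  rw [show (∑ u, ∑ m, ∑ y, pz z * pu u * pm m a z * py y m u * f y)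
      = ∑ m, ∑ u, ∑ y, pz z * pu u * pm m a z * py y m u * f y from Finset.sum_comm ..]
  refine Finset.sum_congr rfl fun m _ => ?_
  rw [Finset.sum_comm]
  rw [show (∑ u, ∑ y, pz z * pu u * pm m a z * py y m u * f y)
      = ∑ y, ∑ u, pz z * pu u * pm m a z * py y m u * f y from Finset.sum_comm ..]
  refine Finset.sum_congr rfl fun y _ => ?_
  rw [Finset.sum_comm]
  refine Finset.sum_congr rfl fun u _ => ?_
  rw [show (∑ a', pz z * pu u * pa a' z u * pm m a z * py y m u * f y)
      = (∑ a', pa a' z u) * (pz z * pu u * pm m a z * py y m u * f y) from by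
        rw [Finset.sum_mul]; exact Finset.sum_congr rfl fun a' _ => by ring,
    hpan, one_mul]
end

section
/- Let Z, A, Y be binary random variables whose joint law is the margin of the linear-structural instrumental variable model: U is a real random variable with finite support, A is binary with p(a | z, u) strictly positive, and Y = β·A + g(U) + ε with E[ε] = 0, ε independent of (Z, U, A), and Z independent of U. Assume E[A | Z=1] ≠ E[A | Z=0]. Then (E[Y | Z=1] − E[Y | Z=0]) / (E[A | Z=1] − E[A | Z=0]) = β, which equals E[Y | do(a=1)] − E[Y | do(a=0)]. -/
open Finset

/-!
Because `Z ⊥ U` and the noise has mean zero, conditioning on `Z = z` leaves the confounder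
contribution `E[g(U)]` unchanged, so `E[Y | Z = z] = β · E[A | Z = z] + E[g(U)]`. This
conditional mean is affine in `E[A | Z = z]` with slope `β`, and the Wald ratio of an affine
relation recovers its slope.
-/

theorem div_sub_eq_slope_of_affine {ι : Type*} {x y : ι → ℝ} {β c : ℝ}
    (h : ∀ i, y i = β * x i + c) {i j : ι} (hij : x i ≠ x j) :
    (y i - y j) / (x i - x j) = β := by
  rw [h i, h j, show β * x i + c - (β * x j + c) = β * (x i - x j) by ring,
    mul_div_assoc, div_self (sub_ne_zero_of_ne hij), mul_one]

section LinearIV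

variable {U E : Type*} [Fintype U] [Fintype E]
  {pZ : Bool → ℝ} {pU : U → ℝ} {pA : Bool → Bool → U → ℝ} {pE : E → ℝ}

theorem sum_mul_noise_eq_zero {eps : E → ℝ} (hEeps : ∑ e, pE e * eps e = 0) (c : ℝ) :
    ∑ e, c * pE e * eps e = 0 := by
  simp_rw [mul_assoc, ← mul_sum, hEeps, mul_zero]

theorem sum_joint_mul_confounder (hpAn : ∀ z u, ∑ a, pA a z u = 1) (hpEn : ∑ e, pE e = 1)
    (z : Bool) (f : U → ℝ) :
    ∑ u, ∑ a, ∑ e, pZ z * pU u * pA a z u * pE e * f u = pZ z * ∑ u, pU u * f u := by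
  simp_rw [mul_right_comm _ (pE _), ← mul_sum, hpEn, mul_one, ← sum_mul, ← mul_sum, hpAn,
    mul_one, mul_assoc, ← mul_sum]

theorem conditional_mean_outcome_eq (β : ℝ) (g : U → ℝ) {eps : E → ℝ}
    (hpUn : ∑ u, pU u = 1) (hpAn : ∀ z u, ∑ a, pA a z u = 1) (hpEn : ∑ e, pE e = 1)
    (hEeps : ∑ e, pE e * eps e = 0) {z : Bool} (hz : pZ z ≠ 0) :
    (∑ u, ∑ a, ∑ e, pZ z * pU u * pA a z u * pE e * (β * (if a then 1 else 0) + g u + eps e)) /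
        (∑ u, ∑ a, ∑ e, pZ z * pU u * pA a z u * pE e) =
      β * ((∑ u, ∑ a, ∑ e, pZ z * pU u * pA a z u * pE e * (if a then 1 else 0)) /
          (∑ u, ∑ a, ∑ e, pZ z * pU u * pA a z u * pE e)) + ∑ u, pU u * g u := by
  have hmass : ∑ u, ∑ a, ∑ e, pZ z * pU u * pA a z u * pE e = pZ z := by
    simpa [hpUn] using sum_joint_mul_confounder (pZ := pZ) (pU := pU) hpAn hpEn z (fun _ => 1)
  simp_rw [mul_add, sum_add_distrib, sum_joint_mul_confounder hpAn hpEn z g,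
    sum_mul_noise_eq_zero hEeps, sum_const_zero, add_zero]
  rw [hmass]
  simp_rw [mul_left_comm _ β, ← mul_sum]
  rw [add_div, mul_div_cancel_left₀ _ hz, mul_div_assoc]

end LinearIV

theorem stmt_11_general
    {U E : Type*} [Fintype U] [Fintype E]
    (β : ℝ) (g : U → ℝ) (eps : E → ℝ)
    (pZ : Bool → ℝ) (pU : U → ℝ) (pA : Bool → Bool → U → ℝ) (pE : E → ℝ)
    (hpZ : ∀ z, 0 < pZ z)
    (hpUn : ∑ u, pU u = 1)
    (hpAn : ∀ z u, ∑ a, pA a z u = 1) (hpEn : ∑ e, pE e = 1)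
    (hEeps : ∑ e, pE e * eps e = 0)
    -- structural outcome: Y(z, u, a, e) = β·A + g(U) + ε
    (Yval : Bool → U → Bool → E → ℝ)
    (hY : ∀ z u a e, Yval z u a e = β * (if a then 1 else 0) + g u + eps e)
    -- joint law of (Z, U, A, ε); Z ⊥ U and ε ⊥ (Z, U, A) are encoded in the product form
    (q : Bool → U → Bool → E → ℝ)
    (hq : ∀ z u a e, q z u a e = pZ z * pU u * pA a z u * pE e)
    (EY : Bool → ℝ)
    (hEY : ∀ z, EY z = (∑ u, ∑ a, ∑ e, q z u a e * Yval z u a e) /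
      (∑ u, ∑ a, ∑ e, q z u a e))
    (EA : Bool → ℝ)
    (hEA : ∀ z, EA z = (∑ u, ∑ a, ∑ e, q z u a e * (if a then 1 else 0)) /
      (∑ u, ∑ a, ∑ e, q z u a e))
    (hrel : EA true ≠ EA false)
    (doMean : ℝ → ℝ)
    (hdo : ∀ aval, doMean aval = β * aval + ∑ u, pU u * g u) :
    (EY true - EY false) / (EA true - EA false) = β ∧
    β = doMean 1 - doMean 0 := by
  have hmean : ∀ z, EY z = β * EA z + ∑ u, pU u * g u := fun z => by
    simp only [hEY, hEA, hq, hY]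
    exact conditional_mean_outcome_eq β g hpUn hpAn hpEn hEeps (hpZ z).ne'
  refine ⟨div_sub_eq_slope_of_affine hmean hrel, ?_⟩
  rw [hdo, hdo]
  ring

/-- In the linear-structural binary IV model (`Z ⊥ U`, `ε ⊥ (Z, U, A)`,
`E[ε] = 0`, `Y = β·A + g(U) + ε`), the Wald ratio
`(E[Y | Z=1] − E[Y | Z=0]) / (E[A | Z=1] − E[A | Z=0])` equals `β`, which is
`E[Y | do(a=1)] − E[Y | do(a=0)]`. -/
theorem stmt_11
    {U E : Type*} [Fintype U] [Fintype E]
    (β : ℝ) (g : U → ℝ) (eps : E → ℝ)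
    (pZ : Bool → ℝ) (pU : U → ℝ) (pA : Bool → Bool → U → ℝ) (pE : E → ℝ)
    (hpZ : ∀ z, 0 < pZ z) (hpU : ∀ u, 0 < pU u)
    (hpA : ∀ a z u, 0 < pA a z u) (hpE : ∀ e, 0 < pE e)
    (hpZn : ∑ z, pZ z = 1) (hpUn : ∑ u, pU u = 1)
    (hpAn : ∀ z u, ∑ a, pA a z u = 1) (hpEn : ∑ e, pE e = 1)
    (hEeps : ∑ e, pE e * eps e = 0)
    -- structural outcome: Y(z, u, a, e) = β·A + g(U) + ε
    (Yval : Bool → U → Bool → E → ℝ)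
    (hY : ∀ z u a e, Yval z u a e = β * (if a then 1 else 0) + g u + eps e)
    -- joint law of (Z, U, A, ε); Z ⊥ U and ε ⊥ (Z, U, A) are encoded in the product form
    (q : Bool → U → Bool → E → ℝ)
    (hq : ∀ z u a e, q z u a e = pZ z * pU u * pA a z u * pE e)
    (EY : Bool → ℝ)
    (hEY : ∀ z, EY z = (∑ u, ∑ a, ∑ e, q z u a e * Yval z u a e) /
      (∑ u, ∑ a, ∑ e, q z u a e))
    (EA : Bool → ℝ)
    (hEA : ∀ z, EA z = (∑ u, ∑ a, ∑ e, q z u a e * (if a then 1 else 0)) /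
      (∑ u, ∑ a, ∑ e, q z u a e))
    (hrel : EA true ≠ EA false)
    (doMean : ℝ → ℝ)
    (hdo : ∀ aval, doMean aval = β * aval + ∑ u, pU u * g u) :
    (EY true - EY false) / (EA true - EA false) = β ∧
    β = doMean 1 - doMean 0 :=
  stmt_11_general β g eps pZ pU pA pE hpZ hpUn hpAn hpEn hEeps Yval hY q hq EY hEY EA hEA hrel
    doMean hdo
end

section
/- Let Z, A, M, Y be finitely-valued with strictly positive joint pmf p satisfying the Verma constraint that q_Y(y | z, m) = Σ_a p(a | z)·p(y | z, a, m) is constant in z (write q_Y(y | m)). Then the reweighted distribution r(z, a, m, y) = p(z, a, m, y) / p(m | a, z), viewed as a kernel over (z, a, y) indexed by m, factorizes as r(z, a, y; m) = p(z) · p(a | z) · p(y | z, a, m), and under the constraint, Z and Y are independent in the normalized kernel r: Σ_a r(z, a, y; m) = p(z) · q_Y(y | m) for all z, y, m. -/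
open Finset

/-- The reweighted distribution `r(z, a, m, y) = p(z, a, m, y)/p(m | a, z)`
factorizes as `p(z)·p(a | z)·p(y | z, a, m)`, and under the Verma constraint `Z` and `Y`
are independent in the kernel `r`: `∑ a, r(z, a, m, y) = p(z) · q_Y(y | m)` (the kernel
`q_Y` being `z`-free, it may be evaluated at any `z'`). -/
theorem stmt_12
    {Z A M Y : Type*} [Fintype Z] [Fintype A] [Fintype M] [Fintype Y]
    (p : Z → A → M → Y → ℝ)
    (hpos : ∀ z a m y, 0 < p z a m y)
    (hnorm : ∑ z, ∑ a, ∑ m, ∑ y, p z a m y = 1)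
    (pZm : Z → ℝ)
    (hpZm : ∀ z, pZm z = ∑ a, ∑ m, ∑ y, p z a m y)
    (pA : A → Z → ℝ)
    (hpA : ∀ a z, pA a z = (∑ m, ∑ y, p z a m y) / (∑ a', ∑ m, ∑ y, p z a' m y))
    (pM : M → A → Z → ℝ)
    (hpM : ∀ m a z, pM m a z = (∑ y, p z a m y) / (∑ m', ∑ y, p z a m' y))
    (pY : Y → Z → A → M → ℝ)
    (hpY : ∀ y z a m, pY y z a m = p z a m y / (∑ y', p z a m y'))
    (qY : Y → Z → M → ℝ)
    (hqY : ∀ y z m, qY y z m = ∑ a, pA a z * pY y z a m)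
    (hVerma : ∀ y z z' m, qY y z m = qY y z' m)
    (r : Z → A → M → Y → ℝ)
    (hr : ∀ z a m y, r z a m y = p z a m y / pM m a z) :
    (∀ z a m y, r z a m y = pZm z * pA a z * pY y z a m) ∧
    (∀ z z' m y, ∑ a, r z a m y = pZm z * qY y z' m) := by
  have hNY : Nonempty Y := by
    by_contra h; rw [not_nonempty_iff] at h; simp at hnorm
  have hNM : Nonempty M := by
    by_contra h; rw [not_nonempty_iff] at h; simp at hnorm
  have hNA : Nonempty A := by
    by_contra h; rw [not_nonempty_iff] at h; simp at hnorm
  have hS1 : ∀ z a m, 0 < ∑ y, p z a m y := fun z a m =>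
    Finset.sum_pos (fun y _ => hpos z a m y) Finset.univ_nonempty
  have hS2 : ∀ z a, 0 < ∑ m, ∑ y, p z a m y := fun z a =>
    Finset.sum_pos (fun m _ => hS1 z a m) Finset.univ_nonempty
  have hS3 : ∀ z, 0 < ∑ a, ∑ m, ∑ y, p z a m y := fun z =>
    Finset.sum_pos (fun a _ => hS2 z a) Finset.univ_nonempty
  have hfac : ∀ z a m y, r z a m y = pZm z * pA a z * pY y z a m := by
    intro z a m y
    rw [hr, hpM, hpZm, hpA, hpY]
    have h1 := (hS1 z a m).ne'
    have h2 := (hS2 z a).ne'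
    have h3 := (hS3 z).ne'
    field_simp
  refine ⟨hfac, fun z z' m y => ?_⟩
  have : ∑ a, r z a m y = pZm z * qY y z m := by
    rw [hqY]
    rw [Finset.mul_sum]
    refine Finset.sum_congr rfl fun a _ => ?_
    rw [hfac]; ring
  rw [this, hVerma y z z' m]
end

section
/- Let Z, A, M, Y be finitely-valued with strictly positive joint pmf p. Suppose p is the margin of the structural model p(z)·p(u)·p(a | z, u)·p(m | a, z)·p(y | m, u) with hidden U. Then the district factorization holds: p(z, a, m, y) = q_Z(z) · q_M(m | a, z) · q_{AY}(a, y | z, m), where q_Z(z) = p(z), q_M(m | a, z) = p(m | a, z), and q_{AY}(a, y | z, m) = p(a | z)·p(y | z, a, m). -/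
open Finset

/-- District factorization for the front-door-with-anchor ADMG. If `p` is
the margin of the structural model `p(z)·p(u)·p(a|z,u)·p(m|a,z)·p(y|m,u)`, then
`p(z, a, m, y) = q_Z(z) · q_M(m | a, z) · q_{AY}(a, y | z, m)` with `q_Z(z) = p(z)`,
`q_M(m | a, z) = p(m | a, z)`, and `q_{AY}(a, y | z, m) = p(a | z)·p(y | z, a, m)`. -/
theorem stmt_13
    {Z U A M Y : Type*} [Fintype Z] [Fintype U] [Fintype A] [Fintype M] [Fintype Y]
    (pz : Z → ℝ) (pu : U → ℝ) (pa : A → Z → U → ℝ)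
    (pm : M → A → Z → ℝ) (py : Y → M → U → ℝ)
    (hpz : ∀ z, 0 < pz z) (hpu : ∀ u, 0 < pu u)
    (hpa : ∀ a z u, 0 < pa a z u) (hpm : ∀ m a z, 0 < pm m a z)
    (hpy : ∀ y m u, 0 < py y m u)
    (hpzn : ∑ z, pz z = 1) (hpun : ∑ u, pu u = 1)
    (hpan : ∀ z u, ∑ a, pa a z u = 1) (hpmn : ∀ a z, ∑ m, pm m a z = 1)
    (hpyn : ∀ m u, ∑ y, py y m u = 1)
    (p : Z → A → M → Y → ℝ)
    (hp : ∀ z a m y, p z a m y = ∑ u, pz z * pu u * pa a z u * pm m a z * py y m u)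
    (qZ : Z → ℝ)
    (hqZ : ∀ z, qZ z = ∑ a, ∑ m, ∑ y, p z a m y)
    (qM : M → A → Z → ℝ)
    (hqM : ∀ m a z, qM m a z = (∑ y, p z a m y) / (∑ m', ∑ y, p z a m' y))
    (qAY : A → Y → Z → M → ℝ)
    (hqAY : ∀ a y z m, qAY a y z m =
      ((∑ m', ∑ y', p z a m' y') / (∑ a', ∑ m', ∑ y', p z a' m' y')) *
      (p z a m y / (∑ y', p z a m y'))) :
    ∀ z a m y, p z a m y = qZ z * qM m a z * qAY a y z m := by
  intro z a m y
  have hUne : (Finset.univ : Finset U).Nonempty := by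
    by_contra h
    rw [Finset.not_nonempty_iff_eq_empty] at h
    rw [h] at hpun; simp at hpun
  set T : Z → A → ℝ := fun z a => ∑ u, pu u * pa a z u with hT
  have hTpos : ∀ z a, 0 < T z a := fun z a =>
    Finset.sum_pos (fun u _ => mul_pos (hpu u) (hpa a z u)) hUne
  have h1 : ∀ m a, (∑ y, p z a m y) = pz z * pm m a z * T z a := by
    intro m a
    simp only [hp]
    rw [Finset.sum_comm]
    simp only [hT, Finset.mul_sum]
    refine Finset.sum_congr rfl fun u _ => ?_
    rw [← Finset.mul_sum, hpyn m u]
    ring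
  have h2 : ∀ a, (∑ m', ∑ y, p z a m' y) = pz z * T z a := by
    intro a
    simp only [h1]
    rw [← Finset.sum_mul, ← Finset.mul_sum, hpmn a z, mul_one]
  have h3 : (∑ a', ∑ m', ∑ y', p z a' m' y') = pz z := by
    simp only [h2]
    rw [← Finset.mul_sum]
    have hs : (∑ a', T z a') = 1 := by
      simp only [hT]
      rw [Finset.sum_comm]
      simp only [← Finset.mul_sum, hpan]
      simpa using hpun
    rw [hs, mul_one]
  have hpzne := (hpz z).ne'
  have hpmne := (hpm m a z).ne'
  have hTne := (hTpos z a).ne'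
  rw [hqZ, hqM, hqAY, h3, h2, h1]
  field_simp
end

section
/- Let Z, A, M, Y, C be finitely-valued with strictly positive joint pmf p that is the margin over hidden finite U of p(c)·p(z | c)·p(u)·p(a | z, c, u)·p(m | a, z, c)·p(y | m, c, u). Then the conditional Verma constraint holds: the kernel q_Y(y | z, m, c) = Σ_a p(a | z, c)·p(y | z, a, m, c) does not depend on z, and equals Σ_u p(u)·p(y | m, c, u). -/
open Finset

/-- Front-door model with baseline covariates `C`. If the observed pmf is
the margin over hidden `U` of `p(c)·p(z|c)·p(u)·p(a|z,c,u)·p(m|a,z,c)·p(y|m,c,u)`, then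
the conditional Verma constraint holds: `q_Y(y | z, m, c) = ∑ a, p(a|z,c)·p(y|z,a,m,c)`
does not depend on `z` and equals `∑ u, p(u)·p(y|m,c,u)`. -/
theorem stmt_16
    {C Z U A M Y : Type*} [Fintype C] [Fintype Z] [Fintype U] [Fintype A]
    [Fintype M] [Fintype Y]
    (pc : C → ℝ) (pzc : Z → C → ℝ) (pu : U → ℝ) (pa : A → Z → C → U → ℝ)
    (pm : M → A → Z → C → ℝ) (py : Y → M → C → U → ℝ)
    (hpc : ∀ c, 0 < pc c) (hpzc : ∀ z c, 0 < pzc z c) (hpu : ∀ u, 0 < pu u)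
    (hpa : ∀ a z c u, 0 < pa a z c u) (hpm : ∀ m a z c, 0 < pm m a z c)
    (hpy : ∀ y m c u, 0 < py y m c u)
    (hpcn : ∑ c, pc c = 1) (hpzcn : ∀ c, ∑ z, pzc z c = 1) (hpun : ∑ u, pu u = 1)
    (hpan : ∀ z c u, ∑ a, pa a z c u = 1) (hpmn : ∀ a z c, ∑ m, pm m a z c = 1)
    (hpyn : ∀ m c u, ∑ y, py y m c u = 1)
    (p : C → Z → A → M → Y → ℝ)
    (hp : ∀ c z a m y,
      p c z a m y = ∑ u, pc c * pzc z c * pu u * pa a z c u * pm m a z c * py y m c u)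
    (pAo : A → Z → C → ℝ)
    (hpAo : ∀ a z c, pAo a z c =
      (∑ m, ∑ y, p c z a m y) / (∑ a', ∑ m, ∑ y, p c z a' m y))
    (pYo : Y → Z → A → M → C → ℝ)
    (hpYo : ∀ y z a m c, pYo y z a m c = p c z a m y / (∑ y', p c z a m y'))
    (qY : Y → Z → M → C → ℝ)
    (hqY : ∀ y z m c, qY y z m c = ∑ a, pAo a z c * pYo y z a m c) :
    ∀ y z m c, qY y z m c = ∑ u, pu u * py y m c u := by
  intro y z m c
  -- key quantities
  have hpform : ∀ a (y' : Y), p c z a m y' =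
      pc c * pzc z c * pm m a z c * ∑ u, pu u * pa a z c u * py y' m c u := by
    intro a y'
    rw [hp, Finset.mul_sum]
    exact Finset.sum_congr rfl fun u _ => by ring
  set S : A → ℝ := fun a => ∑ u, pu u * pa a z c u with hSdef
  have hSpos : ∀ a, 0 < S a := by
    intro a
    have h1 : S a = ∑ u, pu u * pa a z c u := rfl
    rcases (Finset.univ : Finset U).eq_empty_or_nonempty with h | h
    · rw [h] at hpun; simp at hpun
    · exact Finset.sum_pos (fun u _ => mul_pos (hpu u) (hpa a z c u)) h
  have hK : (0:ℝ) < pc c * pzc z c := mul_pos (hpc c) (hpzc z c)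
  -- sum over y'
  have hsy : ∀ a, ∑ y', p c z a m y' = pc c * pzc z c * pm m a z c * S a := by
    intro a
    simp only [hpform]
    rw [← Finset.mul_sum, Finset.sum_comm]
    congr 1
    refine Finset.sum_congr rfl fun u _ => ?_
    rw [← Finset.mul_sum, hpyn, mul_one]
  have hsmy : ∀ a, ∑ m', ∑ y', p c z a m' y' = pc c * pzc z c * S a := by
    intro a
    have : ∀ m', ∑ y', p c z a m' y' = pc c * pzc z c * pm m' a z c * S a := by
      intro m'
      have hpform' : ∀ (y' : Y), p c z a m' y' =
          pc c * pzc z c * pm m' a z c * ∑ u, pu u * pa a z c u * py y' m' c u := by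
        intro y'
        rw [hp, Finset.mul_sum]
        exact Finset.sum_congr rfl fun u _ => by ring
      simp only [hpform']
      rw [← Finset.mul_sum, Finset.sum_comm]
      congr 1
      refine Finset.sum_congr rfl fun u _ => ?_
      rw [← Finset.mul_sum, hpyn, mul_one]
    simp only [this]
    rw [← Finset.sum_mul, ← Finset.mul_sum, hpmn, mul_one]
  have hden : ∑ a', ∑ m', ∑ y', p c z a' m' y' = pc c * pzc z c := by
    simp only [hsmy]
    rw [← Finset.mul_sum]
    have : ∑ a', S a' = 1 := by
      rw [hSdef, Finset.sum_comm]
      simp only [← Finset.mul_sum, hpan]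
      simpa using hpun
    rw [this, mul_one]
  have hpAo' : ∀ a, pAo a z c = S a := by
    intro a
    rw [hpAo, hsmy, hden]
    exact mul_div_cancel_left₀ _ hK.ne'
  have hpYo' : ∀ a, pYo y z a m c = (∑ u, pu u * pa a z c u * py y m c u) / S a := by
    intro a
    rw [hpYo, hsy, hpform]
    rw [mul_div_mul_left _ _ (mul_pos hK (hpm m a z c)).ne']
  rw [hqY]
  have : ∀ a ∈ Finset.univ, pAo a z c * pYo y z a m c
      = ∑ u, pu u * pa a z c u * py y m c u := by
    intro a _
    rw [hpAo' a, hpYo' a, mul_div_cancel₀ _ (hSpos a).ne']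
  rw [Finset.sum_congr rfl this, Finset.sum_comm]
  refine Finset.sum_congr rfl fun u _ => ?_
  rw [← Finset.sum_mul]
  have : ∑ a, pu u * pa a z c u = pu u := by
    rw [← Finset.mul_sum, hpan, mul_one]
  rw [this]
end

section
/- Construct a strictly positive joint pmf over binary Z, A, M, Y (as the margin of a hidden-variable model with binary U where p(z,u,a,m,y) = p(z)·p(u)·p(a | z,u)·p(m | a,z,u)·p(y | m,u), i.e., U also confounds M) such that the Verma constraint fails: there exist y, z, z', m with Σ_a p(a | z)·p(y | z, a, m) ≠ Σ_a p(a | z')·p(y | z', a, m). (It suffices to exhibit explicit numerical conditional probability tables.) -/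
/-!
Let `U` be a fair coin, let `M` and `Y` be noisy copies of `U`, and let `A` be a noisy copy of
`Z ∧ U`. For `z = false`, `A` is independent of `U`, so the Verma functional at `m = y = true`
collapses to `p(Y = true | M = true) = 5/8`. For `z = true`, `A` carries information on `U`, and
reweighting `p(y | z, a, m)` by `p(a | z)` rather than `p(a | z, m)` gives `3/5` instead.
-/

noncomputable section

def bernoulliMass (θ : ℝ) (b : Bool) : ℝ := if b then θ else 1 - θ

lemma bernoulliMass_pos {θ : ℝ} (h₀ : 0 < θ) (h₁ : θ < 1) (b : Bool) : 0 < bernoulliMass θ b := by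
  cases b <;> simp [bernoulliMass, h₀, h₁]

lemma sum_bernoulliMass (θ : ℝ) : ∑ b, bernoulliMass θ b = 1 := by
  simp [bernoulliMass]

/-- The identified functional `∑ a, p(a | z) · p(y | z, a, m)` of the front-door graph. -/
def vermaFunctional {Z A M Y : Type*} [Fintype A] [Fintype M] [Fintype Y]
    (p : Z → A → M → Y → ℝ) (y : Y) (z : Z) (m : M) : ℝ :=
  ∑ a, ((∑ m', ∑ y', p z a m' y') / (∑ a', ∑ m', ∑ y', p z a' m' y')) *
    (p z a m y / (∑ y', p z a m y'))

namespace VermaCounterexample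

def noisyCopyProb (u : Bool) : ℝ := if u then 3/4 else 1/4

lemma noisyCopyProb_pos (u : Bool) : 0 < noisyCopyProb u := by
  cases u <;> norm_num [noisyCopyProb]

lemma noisyCopyProb_lt_one (u : Bool) : noisyCopyProb u < 1 := by
  cases u <;> norm_num [noisyCopyProb]

lemma bernoulliMass_noisyCopyProb_pos (u b : Bool) : 0 < bernoulliMass (noisyCopyProb u) b :=
  bernoulliMass_pos (noisyCopyProb_pos u) (noisyCopyProb_lt_one u) b

def pZ : Bool → ℝ := bernoulliMass (1/2)

def pU : Bool → ℝ := bernoulliMass (1/2)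

def pA (a z u : Bool) : ℝ := bernoulliMass (noisyCopyProb (z && u)) a

def pM (m _a _z u : Bool) : ℝ := bernoulliMass (noisyCopyProb u) m

def pY (y _m u : Bool) : ℝ := bernoulliMass (noisyCopyProb u) y

def joint (z a m y : Bool) : ℝ := ∑ u, pZ z * pU u * pA a z u * pM m a z u * pY y m u

lemma vermaFunctional_joint_false : vermaFunctional joint true false true = 5/8 := by
  simp only [vermaFunctional, joint, pZ, pU, pA, pM, pY, noisyCopyProb, bernoulliMass,
    Fintype.sum_bool, Bool.false_and]
  norm_num

lemma vermaFunctional_joint_true : vermaFunctional joint true true true = 3/5 := by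
  simp only [vermaFunctional, joint, pZ, pU, pA, pM, pY, noisyCopyProb, bernoulliMass,
    Fintype.sum_bool, Bool.true_and]
  norm_num

end VermaCounterexample

end

open VermaCounterexample in
/-- There exists a strictly positive joint pmf over binary `Z, A, M, Y`,
arising as the margin of a hidden-variable model `p(z)·p(u)·p(a|z,u)·p(m|a,z,u)·p(y|m,u)`
with binary `U` also confounding `M`, for which the Verma constraint fails: there are
`y, z, z', m` with `∑ a, p(a|z)·p(y|z,a,m) ≠ ∑ a, p(a|z')·p(y|z',a,m)`. -/
theorem stmt_17 :
    ∃ (pz pu : Bool → ℝ) (pa : Bool → Bool → Bool → ℝ)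
      (pm : Bool → Bool → Bool → Bool → ℝ) (py : Bool → Bool → Bool → ℝ)
      (p : Bool → Bool → Bool → Bool → ℝ) (qY : Bool → Bool → Bool → ℝ),
      (∀ z, 0 < pz z) ∧ (∀ u, 0 < pu u) ∧ (∀ a z u, 0 < pa a z u) ∧
      (∀ m a z u, 0 < pm m a z u) ∧ (∀ y m u, 0 < py y m u) ∧
      (∑ z, pz z = 1) ∧ (∑ u, pu u = 1) ∧
      (∀ z u, ∑ a, pa a z u = 1) ∧ (∀ a z u, ∑ m, pm m a z u = 1) ∧
      (∀ m u, ∑ y, py y m u = 1) ∧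
      (∀ z a m y, p z a m y = ∑ u, pz z * pu u * pa a z u * pm m a z u * py y m u) ∧
      (∀ y z m, qY y z m =
        ∑ a, ((∑ m', ∑ y', p z a m' y') / (∑ a', ∑ m', ∑ y', p z a' m' y')) *
          (p z a m y / (∑ y', p z a m y'))) ∧
      (∃ y z z' m, qY y z m ≠ qY y z' m) := by
  have half_pos : (0 : ℝ) < 1/2 := by norm_num
  have half_lt_one : (1/2 : ℝ) < 1 := by norm_num
  refine ⟨pZ, pU, pA, pM, pY, joint, vermaFunctional joint,
    bernoulliMass_pos half_pos half_lt_one, bernoulliMass_pos half_pos half_lt_one,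
    fun a z u => bernoulliMass_noisyCopyProb_pos (z && u) a,
    fun m _ _ u => bernoulliMass_noisyCopyProb_pos u m,
    fun y _ u => bernoulliMass_noisyCopyProb_pos u y,
    sum_bernoulliMass _, sum_bernoulliMass _,
    fun _ _ => sum_bernoulliMass _, fun _ _ _ => sum_bernoulliMass _,
    fun _ _ => sum_bernoulliMass _, fun _ _ _ _ => rfl, fun _ _ _ => rfl,
    true, false, true, true, ?_⟩
  rw [vermaFunctional_joint_false, vermaFunctional_joint_true]
  norm_num
end
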